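/- Let a < b be positive integers. Let w, A : ℝ → ℂ be real-analytic and 2π-periodic, with w not identically zero. Assume: (i) every zero of w is of order exactly 2; (ii) Re(w(t))·Im(w'(t)) − Im(w(t))·Re(w'(t)) ≠ 0 for every t with w(t) ≠ 0; (iii) at every zero t₀ of w: Im(w'''(t₀)/(3·w''(t₀))) ≠ 0, the number A(t₀)·conj(w''(t₀)) is real and nonzero, Re(conj(A(t₀))·A'(t₀)) = 0, and Im(A'(t₀)/A(t₀)) − Im(w'''(t₀)/(3·w''(t₀))) = ((a+b)/(2b−a))·Im(w'''(t₀)/(3·w''(t₀))). Then there exists r₀ > 0 such that for every r with 0 < r < r₀ and every t ∈ ℝ: Re(a·r^{a−1}·w(t) + b·r^{b−1}·A(t))·Im(r^a·w'(t) + r^b·A'(t)) − Im(a·r^{a−1}·w(t) + b·r^{b−1}·A(t))·Re(r^a·w'(t) + r^b·A'(t)) ≠ 0. -/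

import Mathlib

/-!
With `cross u v = Im (conj u * v)`, the Jacobian equals `r ^ (2a - 1) * H (r ^ (b - a)) t` where
`H s t = cross (a w + s b A) (w' + s A')`, so it suffices that `H s t ≠ 0` for small `s > 0`.
Away from the zeros of `w`, `H 0 t = a cross w w' ≠ 0` and continuity suffices. Near a zero `t₁`
write `w = (t - t₁)² W`; since `A (t₁)` is a real multiple of `W (t₁)`, `cross A W` vanishes at
`t₁` and `H = a u⁴ P + s u² Q + s² b R` with `u = t - t₁` and `P, Q, R` continuous. The
interpolation relation gives `Q (t₁) = 0` and `P (t₁) R (t₁) > 0`, so the discriminant of this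
quadratic form in `(u², s)` is negative near `t₁`. Compactness of a period makes the bound on
`s` uniform in `t`.
-/

open Filter Topology ComplexConjugate

noncomputable section

namespace Complex

def cross (u v : ℂ) : ℝ := (conj u * v).im

lemma cross_def (u v : ℂ) : cross u v = u.re * v.im - u.im * v.re := by
  simp only [cross, mul_im, conj_re, conj_im]; ring

lemma cross_self (u : ℂ) : cross u u = 0 := by
  rw [cross_def]; ring

lemma cross_anticomm (u v : ℂ) : cross v u = -cross u v := by
  simp only [cross_def]; ring

lemma cross_smul_left (c : ℝ) (u v : ℂ) : cross (c • u) v = c * cross u v := by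
  simp only [cross_def, real_smul, mul_re, mul_im, ofReal_re, ofReal_im]; ring

lemma cross_smul_right (c : ℝ) (u v : ℂ) : cross u (c • v) = c * cross u v := by
  simp only [cross_def, real_smul, mul_re, mul_im, ofReal_re, ofReal_im]; ring

lemma cross_eq_normSq_mul_div_im (u v : ℂ) : cross u v = normSq u * (v / u).im := by
  rcases eq_or_ne u 0 with rfl | hu
  · simp [cross]
  · rw [div_im, mul_sub, mul_div_cancel₀ _ (normSq_pos.2 hu).ne',
      mul_div_cancel₀ _ (normSq_pos.2 hu).ne', cross_def]
    ring

lemma exists_real_smul_eq_of_im_mul_conj_eq_zero {z u : ℂ} (h : (z * conj u).im = 0)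
    (hu : u ≠ 0) : ∃ c : ℝ, z = c • u := by
  have hreal : z * conj u = ((z * conj u).re : ℂ) := ext rfl (by simp [h])
  refine ⟨(z * conj u).re / normSq u, ?_⟩
  rw [real_smul, ofReal_div, ← hreal, ← mul_conj]
  field_simp [(map_ne_zero (starRingEnd ℂ)).2 hu]

lemma _root_.HasDerivAt.cross {f g : ℝ → ℂ} {f' g' : ℂ} {t : ℝ} (hf : HasDerivAt f f' t)
    (hg : HasDerivAt g g' t) :
    HasDerivAt (fun t => cross (f t) (g t)) (cross f' (g t) + cross (f t) g') t := by
  refine (imCLM.hasFDerivAt.comp_hasDerivAt t (hf.star.mul hg)).congr_deriv ?_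
  simp only [RCLike.star_def, imCLM_apply, add_im, mul_im, conj_re, conj_im, cross_def]; ring

@[fun_prop]
lemma _root_.ContinuousAt.cross {X : Type*} [TopologicalSpace X] {f g : X → ℂ} {x : X}
    (hf : ContinuousAt f x) (hg : ContinuousAt g x) :
    ContinuousAt (fun x => cross (f x) (g x)) x := by
  unfold Complex.cross; fun_prop

end Complex

open Complex

lemma quadratic_ne_zero {c₁ e c₂ x y : ℝ} (h : e ^ 2 < 4 * c₁ * c₂) (hy : y ≠ 0) :
    c₁ * x ^ 2 + e * x * y + c₂ * y ^ 2 ≠ 0 := by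
  intro h0
  have hsq : (2 * c₁ * x + e * y) ^ 2 + (4 * c₁ * c₂ - e ^ 2) * y ^ 2 = 0 := by
    linear_combination 4 * c₁ * h0
  have : 0 < (4 * c₁ * c₂ - e ^ 2) * y ^ 2 := mul_pos (by linarith) (pow_two_pos_of_ne_zero hy)
  linarith [sq_nonneg (2 * c₁ * x + e * y)]

lemma eventually_forall_of_periodic {X : Type*} [TopologicalSpace X] {x₀ : X} {c : ℝ}
    (hc : 0 < c) {P : X → ℝ → Prop} (hP : ∀ x, Function.Periodic (P x) c)
    (h : ∀ t, ∀ᶠ z : X × ℝ in 𝓝 (x₀, t), P z.1 z.2) : ∀ᶠ x in 𝓝 x₀, ∀ t, P x t := by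
  filter_upwards [isCompact_Icc.eventually_forall_of_forall_eventually fun t _ => h t]
    with x hx t
  obtain ⟨t', ht', he⟩ := (hP x).exists_mem_Ico₀ hc t
  exact he ▸ hx t' (Set.Ico_subset_Icc_self ht')

section OneVariable

variable {𝕜 E : Type*} [NontriviallyNormedField 𝕜] [NormedAddCommGroup E] [NormedSpace 𝕜 E]

lemma Function.Periodic.deriv {f : 𝕜 → E} {c : 𝕜} (hf : Function.Periodic f c) :
    Function.Periodic (deriv f) c := fun t => by
  rw [← deriv_comp_add_const, funext hf]

lemma AnalyticAt.exists_eq_sub_sq_smul {f : 𝕜 → E} {x : 𝕜} (hf : AnalyticAt 𝕜 f x)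
    (h₀ : f x = 0) (h₁ : deriv f x = 0) :
    ∃ W : 𝕜 → E, AnalyticAt 𝕜 W x ∧ ∀ t, f t = (t - x) ^ 2 • W t := by
  obtain ⟨p, hp⟩ := hf
  refine ⟨dslope (dslope f x) x,
    ⟨_, hp.has_fpower_series_dslope_fslope.has_fpower_series_dslope_fslope⟩, fun t => ?_⟩
  have h₂ : dslope f x x = 0 := by rw [dslope_same, h₁]
  rw [pow_two, mul_smul, sub_smul_dslope, h₂, sub_zero, sub_smul_dslope, h₀, sub_zero]

lemma iteratedDeriv_sub_sq_smul {W : 𝕜 → E} {x : 𝕜} (n : ℕ) (hW : ContDiffAt 𝕜 (n + 2) W x) :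
    iteratedDeriv (n + 2) (fun t => (t - x) ^ 2 • W t) x
      = (((n + 2) * (n + 1) : ℕ) : 𝕜) • iteratedDeriv n W x := by
  have hsq : ∀ i, iteratedDeriv i (fun t => (t - x) ^ 2) x = if i = 2 then 2 else 0 := by
    intro i
    rw [iteratedDeriv_comp_sub_const i (· ^ 2) x]
    simp only [sub_self, iteratedDeriv_fun_pow_zero]
    norm_num
  have := iteratedDerivWithin_smul (Set.mem_univ x) uniqueDiffOn_univ
    (f := fun t => (t - x) ^ 2) (g := W) (n := n + 2) (by fun_prop) hW.contDiffWithinAt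
  simp only [iteratedDerivWithin_univ] at this
  rw [show (fun t => (t - x) ^ 2 • W t) = (fun t => (t - x) ^ 2) • W from rfl, this]
  have hc : (n + 2).choose 2 * 2 = (n + 2) * (n + 1) := by
    simpa [mul_comm] using (Nat.add_one_mul_choose_eq (n + 1) 1).symm
  simp only [hsq, ite_smul, zero_smul, smul_ite, smul_zero, Finset.sum_ite_eq', Finset.mem_range]
  rw [if_pos (by omega), ← hc, Nat.cast_mul, mul_smul, Nat.cast_smul_eq_nsmul, Nat.add_sub_cancel]
  norm_num

end OneVariable

lemma middle_coeff_eq_zero_and_outer_coeffs_mul_pos {α β c : ℝ} {W₀ W₁ A₀ A₁ : ℂ} (hα : 0 < α) (hαβ : α < β)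
    (hW₀ : W₀ ≠ 0) (hc : c ≠ 0) (hA₀ : A₀ = c • W₀) (hμ : (W₁ / W₀).im ≠ 0)
    (hν : (2 * β - α) * (A₁ / A₀).im = 3 * β * (W₁ / W₀).im) :
    α * cross W₀ A₁ + β * cross A₀ W₁ + 2 * β * (cross A₁ W₀ + cross A₀ W₁) = 0 ∧
      0 < cross W₀ W₁ * cross A₀ A₁ := by
  have hN : 0 < normSq W₀ := normSq_pos.2 hW₀
  have hP : cross W₀ W₁ = normSq W₀ * (W₁ / W₀).im := cross_eq_normSq_mul_div_im _ _
  have hQ : cross W₀ A₁ = c * normSq W₀ * (A₁ / A₀).im := by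
    rw [cross_eq_normSq_mul_div_im, hA₀, real_smul, div_mul_eq_div_div_swap, div_ofReal_im]
    field_simp
  have hAW₁ : cross A₀ W₁ = c * cross W₀ W₁ := by rw [hA₀, cross_smul_left]
  have hAA₁ : cross A₀ A₁ = c * cross W₀ A₁ := by rw [hA₀, cross_smul_left]
  have hkey : (2 * β - α) * cross W₀ A₁ = 3 * β * c * cross W₀ W₁ := by
    rw [hQ, hP]; linear_combination c * normSq W₀ * hν
  have hPne : cross W₀ W₁ ≠ 0 := hP ▸ mul_ne_zero hN.ne' hμ
  constructor
  · rw [cross_anticomm W₀ A₁, hAW₁]; linear_combination -hkey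
  · rw [hAA₁]
    have : 0 < (2 * β - α) * (cross W₀ W₁ * (c * cross W₀ A₁)) := by
      rw [show (2 * β - α) * (cross W₀ W₁ * (c * cross W₀ A₁))
        = 3 * β * (c * cross W₀ W₁) ^ 2 by linear_combination c * cross W₀ W₁ * hkey]
      exact mul_pos (by linarith) (pow_two_pos_of_ne_zero (mul_ne_zero hc hPne))
    exact pos_of_mul_pos_right this (by linarith)

def rescaledJacobian (α β : ℝ) (w A : ℝ → ℂ) (s t : ℝ) : ℝ :=
  cross (α • w t + (s * β) • A t) (deriv w t + s • deriv A t)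

section RescaledJacobian

variable {α β : ℝ} {w A : ℝ → ℂ} {t₁ : ℝ}

lemma jacobian_eq_rescaledJacobian {a b : ℕ} (ha : 0 < a) (hab : a ≤ b) (w A : ℝ → ℂ)
    (r t : ℝ) :
    ((a : ℂ) * (r : ℂ) ^ (a - 1) * w t + (b : ℂ) * (r : ℂ) ^ (b - 1) * A t).re *
          ((r : ℂ) ^ a * deriv w t + (r : ℂ) ^ b * deriv A t).im -
        ((a : ℂ) * (r : ℂ) ^ (a - 1) * w t + (b : ℂ) * (r : ℂ) ^ (b - 1) * A t).im *
          ((r : ℂ) ^ a * deriv w t + (r : ℂ) ^ b * deriv A t).re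
      = r ^ (a - 1) * r ^ a * rescaledJacobian a b w A (r ^ (b - a)) t := by
  rw [← cross_def, rescaledJacobian, mul_assoc (r ^ (a - 1)), ← cross_smul_right,
    ← cross_smul_left]
  obtain ⟨j, rfl⟩ : ∃ j, a = j + 1 := ⟨a - 1, by omega⟩
  obtain ⟨k, rfl⟩ := Nat.exists_eq_add_of_le hab
  rw [Nat.add_sub_cancel, Nat.add_sub_cancel_left, show j + 1 + k - 1 = j + k by omega]
  congr 1 <;> push_cast [real_smul] <;> ring

lemma rescaledJacobian_zero_left (t : ℝ) :
    rescaledJacobian α β w A 0 t = α * cross (w t) (deriv w t) := by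
  simp only [rescaledJacobian, zero_mul, zero_smul, add_zero, cross_smul_left]

lemma Function.Periodic.rescaledJacobian {c : ℝ} (hw : Function.Periodic w c)
    (hA : Function.Periodic A c) (s : ℝ) : Function.Periodic (rescaledJacobian α β w A s) c :=
  fun t => by simp only [_root_.rescaledJacobian, hw t, hA t, hw.deriv t, hA.deriv t]

lemma eventually_rescaledJacobian_ne_zero_of_cross_ne_zero (hα : α ≠ 0)
    (hw : AnalyticAt ℝ w t₁) (hA : AnalyticAt ℝ A t₁) (h : cross (w t₁) (deriv w t₁) ≠ 0) :
    ∀ᶠ z : ℝ × ℝ in 𝓝 (0, t₁), rescaledJacobian α β w A z.1 z.2 ≠ 0 := by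
  have hcont : ContinuousAt (fun z : ℝ × ℝ => rescaledJacobian α β w A z.1 z.2) (0, t₁) := by
    have := hw.continuousAt
    have := hw.deriv.continuousAt
    have := hA.continuousAt
    have := hA.deriv.continuousAt
    unfold rescaledJacobian
    fun_prop
  exact hcont.eventually_ne (by rw [rescaledJacobian_zero_left]; exact mul_ne_zero hα h)

lemma rescaledJacobian_eq_of_eq_sub_sq_smul {W : ℝ → ℂ} (hw : ∀ t, w t = (t - t₁) ^ 2 • W t)
    {t : ℝ} (hW : DifferentiableAt ℝ W t) (s : ℝ) :
    rescaledJacobian α β w A s t =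
      α * (t - t₁) ^ 4 * cross (W t) (deriv W t)
      + s * (t - t₁) ^ 2 * (α * cross (W t) (deriv A t) + β * cross (A t) (deriv W t))
      + 2 * s * β * (t - t₁) * cross (A t) (W t) + s ^ 2 * β * cross (A t) (deriv A t) := by
  have hd : deriv w t = (t - t₁) ^ 2 • deriv W t + (2 * (t - t₁)) • W t := by
    rw [funext hw, ((((hasDerivAt_id' t).sub_const t₁).fun_pow 2).fun_smul hW.hasDerivAt).deriv]
    norm_num
  simp only [rescaledJacobian, hd, hw, cross_def, real_smul, add_re, add_im, mul_re, mul_im,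
    ofReal_re, ofReal_im]
  ring

lemma eventually_rescaledJacobian_ne_zero_of_eq_sub_sq_smul {W : ℝ → ℂ} (hα : 0 < α)
    (hβ : 0 < β) (hW : AnalyticAt ℝ W t₁) (hA : AnalyticAt ℝ A t₁)
    (hw : ∀ t, w t = (t - t₁) ^ 2 • W t) (hAW : cross (A t₁) (W t₁) = 0)
    (hQ : α * cross (W t₁) (deriv A t₁) + β * cross (A t₁) (deriv W t₁)
      + 2 * β * (cross (deriv A t₁) (W t₁) + cross (A t₁) (deriv W t₁)) = 0)
    (hPR : 0 < cross (W t₁) (deriv W t₁) * cross (A t₁) (deriv A t₁)) :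
    ∀ᶠ t in 𝓝 t₁, ∀ s ≠ 0, rescaledJacobian α β w A s t ≠ 0 := by
  set m := fun t => cross (A t) (W t)
  have hm : HasDerivAt m (cross (deriv A t₁) (W t₁) + cross (A t₁) (deriv W t₁)) t₁ :=
    hA.differentiableAt.hasDerivAt.cross hW.differentiableAt.hasDerivAt
  set g := dslope m t₁
  have hmg : ∀ t, m t = (t - t₁) * g t := fun t => by
    rw [← smul_eq_mul, sub_smul_dslope, show m t₁ = 0 from hAW, sub_zero]
  set Q := fun t => α * cross (W t) (deriv A t) + β * cross (A t) (deriv W t) + 2 * β * g t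
  have hQ₁ : Q t₁ = 0 := by simpa only [Q, g, dslope_same, hm.deriv] using hQ
  set D := fun t => Q t ^ 2 - 4 * (α * cross (W t) (deriv W t)) * (β * cross (A t) (deriv A t))
  have hD : ContinuousAt D t₁ := by
    have := hA.continuousAt
    have := hA.deriv.continuousAt
    have := hW.continuousAt
    have := hW.deriv.continuousAt
    have : ContinuousAt g t₁ := continuousAt_dslope_same.2 hm.differentiableAt
    fun_prop
  have hD₁ : D t₁ < 0 := by
    simp only [D, hQ₁]
    nlinarith [mul_pos hα hβ]
  filter_upwards [hD.eventually (gt_mem_nhds hD₁), hW.eventually_analyticAt] with t ht hWt s hs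
  have := quadratic_ne_zero (x := (t - t₁) ^ 2) (sub_neg.1 ht) hs
  rw [rescaledJacobian_eq_of_eq_sub_sq_smul hw hWt.differentiableAt,
    show cross (A t) (W t) = m t from rfl, hmg]
  convert this using 1
  simp only [Q]
  ring

lemma eventually_rescaledJacobian_ne_zero_of_eq_zero (hα : 0 < α) (hαβ : α < β)
    (hw : AnalyticAt ℝ w t₁) (hA : AnalyticAt ℝ A t₁) (h₀ : w t₁ = 0) (h₁ : deriv w t₁ = 0)
    (h₂ : iteratedDeriv 2 w t₁ ≠ 0)
    (hμ : (iteratedDeriv 3 w t₁ / (3 * iteratedDeriv 2 w t₁)).im ≠ 0)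
    (hreal : (A t₁ * conj (iteratedDeriv 2 w t₁)).im = 0)
    (hne : A t₁ * conj (iteratedDeriv 2 w t₁) ≠ 0)
    (hν : (deriv A t₁ / A t₁).im - (iteratedDeriv 3 w t₁ / (3 * iteratedDeriv 2 w t₁)).im
      = (α + β) / (2 * β - α) * (iteratedDeriv 3 w t₁ / (3 * iteratedDeriv 2 w t₁)).im) :
    ∀ᶠ t in 𝓝 t₁, ∀ s ≠ 0, rescaledJacobian α β w A s t ≠ 0 := by
  obtain ⟨W, hW, hwW⟩ := hw.exists_eq_sub_sq_smul h₀ h₁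
  have hw₂ : iteratedDeriv 2 w t₁ = 2 * W t₁ := by
    have := iteratedDeriv_sub_sq_smul 0 (hW.contDiffAt (n := 2))
    rw [← funext hwW] at this
    simpa using this
  have hw₃ : iteratedDeriv 3 w t₁ = 6 * deriv W t₁ := by
    have := iteratedDeriv_sub_sq_smul 1 (hW.contDiffAt (n := 3))
    rw [← funext hwW] at this
    simpa using this
  have hW₀ : W t₁ ≠ 0 := fun h => h₂ (by rw [hw₂, h, mul_zero])
  have hratio : iteratedDeriv 3 w t₁ / (3 * iteratedDeriv 2 w t₁) = deriv W t₁ / W t₁ := by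
    rw [hw₂, hw₃]; field_simp; ring
  rw [hratio] at hμ hν
  rw [hw₂, map_mul, map_ofNat, mul_left_comm] at hreal hne
  obtain ⟨c, hc⟩ := exists_real_smul_eq_of_im_mul_conj_eq_zero (by simpa using hreal) hW₀
  have hc₀ : c ≠ 0 := by
    rintro rfl
    simp [hc] at hne
  have hν' : (2 * β - α) * (deriv A t₁ / A t₁).im = 3 * β * (deriv W t₁ / W t₁).im := by
    rw [div_mul_eq_mul_div, eq_div_iff (by linarith)] at hν
    linear_combination hν
  obtain ⟨hQ, hPR⟩ := middle_coeff_eq_zero_and_outer_coeffs_mul_pos hα hαβ hW₀ hc₀ hc hμ hν'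
  refine eventually_rescaledJacobian_ne_zero_of_eq_sub_sq_smul hα (by linarith) hW hA hwW ?_
    hQ hPR
  rw [hc, cross_smul_left, Complex.cross_self, mul_zero]

end RescaledJacobian

theorem deformation_jacobian_nonvanishing_general
    (a b : ℕ) (ha : 0 < a) (hab : a < b)
    (w A : ℝ → ℂ)
    (hw_an : ∀ t : ℝ, AnalyticAt ℝ w t) (hA_an : ∀ t : ℝ, AnalyticAt ℝ A t)
    (hw_per : ∀ t : ℝ, w (t + 2 * Real.pi) = w t)
    (hA_per : ∀ t : ℝ, A (t + 2 * Real.pi) = A t)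
    (horder : ∀ t₀ : ℝ, w t₀ = 0 → deriv w t₀ = 0 ∧ iteratedDeriv 2 w t₀ ≠ 0)
    (harg : ∀ t : ℝ, w t ≠ 0 →
      (w t).re * (deriv w t).im - (w t).im * (deriv w t).re ≠ 0)
    (hzero : ∀ t₀ : ℝ, w t₀ = 0 →
      (iteratedDeriv 3 w t₀ / (3 * iteratedDeriv 2 w t₀)).im ≠ 0 ∧
      (A t₀ * (starRingEnd ℂ) (iteratedDeriv 2 w t₀)).im = 0 ∧
      A t₀ * (starRingEnd ℂ) (iteratedDeriv 2 w t₀) ≠ 0 ∧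
      ((starRingEnd ℂ) (A t₀) * deriv A t₀).re = 0 ∧
      (deriv A t₀ / A t₀).im - (iteratedDeriv 3 w t₀ / (3 * iteratedDeriv 2 w t₀)).im
        = (((a : ℝ) + (b : ℝ)) / (2 * (b : ℝ) - (a : ℝ))) *
            (iteratedDeriv 3 w t₀ / (3 * iteratedDeriv 2 w t₀)).im) :
    ∃ r₀ > (0 : ℝ), ∀ r : ℝ, 0 < r → r < r₀ → ∀ t : ℝ,
      ((a : ℂ) * (r : ℂ) ^ (a - 1) * w t + (b : ℂ) * (r : ℂ) ^ (b - 1) * A t).re *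
          ((r : ℂ) ^ a * deriv w t + (r : ℂ) ^ b * deriv A t).im -
        ((a : ℂ) * (r : ℂ) ^ (a - 1) * w t + (b : ℂ) * (r : ℂ) ^ (b - 1) * A t).im *
          ((r : ℂ) ^ a * deriv w t + (r : ℂ) ^ b * deriv A t).re ≠ 0 := by
  have hlocal : ∀ t₁, ∀ᶠ z : ℝ × ℝ in 𝓝 (0, t₁),
      0 < z.1 → rescaledJacobian a b w A z.1 z.2 ≠ 0 := by
    intro t₁
    by_cases h : w t₁ = 0
    · obtain ⟨h₁, h₂⟩ := horder t₁ h
      obtain ⟨hμ, hreal, hne, -, hν⟩ := hzero t₁ h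
      have := eventually_rescaledJacobian_ne_zero_of_eq_zero (by exact_mod_cast ha)
        (by exact_mod_cast hab) (hw_an t₁) (hA_an t₁) h h₁ h₂ hμ hreal hne hν
      exact (continuousAt_snd.eventually this).mono fun z hz hs => hz z.1 hs.ne'
    · refine (eventually_rescaledJacobian_ne_zero_of_cross_ne_zero (by positivity) (hw_an t₁)
        (hA_an t₁) ?_).mono fun z hz _ => hz
      rw [cross_def]; exact harg t₁ h
  have hs : ∀ᶠ s in 𝓝 (0 : ℝ), ∀ t, 0 < s → rescaledJacobian a b w A s t ≠ 0 :=
    eventually_forall_of_periodic Real.two_pi_pos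
      (fun s t => by simp only [Function.Periodic.rescaledJacobian hw_per hA_per s t]) hlocal
  have hr : ∀ᶠ r in 𝓝 (0 : ℝ), ∀ t, 0 < r → rescaledJacobian a b w A (r ^ (b - a)) t ≠ 0 :=
    (((continuous_pow (b - a)).tendsto' 0 0 (zero_pow (by omega))).eventually hs).mono
      fun r h t hr => h t (pow_pos hr _)
  obtain ⟨r₀, hr₀, h⟩ := Metric.eventually_nhds_iff.1 hr
  refine ⟨r₀, hr₀, fun r hr hrr₀ t => ?_⟩
  rw [jacobian_eq_rescaledJacobian ha hab.le]
  exact mul_ne_zero (by positivity) (h (by simpa [abs_of_pos hr]) t hr)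

/-- Nonvanishing of the Jacobian determinant of `(r, t) ↦ r^a w(t) + r^b A(t)` for small
`r > 0`, under the hypotheses of the paper: `w, A` are real-analytic and `2π`-periodic, `w` is
not identically zero, every zero of `w` is of order exactly `2`, away from its zeros `w` has
nonvanishing argument-derivative, and at every zero `t₀` of `w` the interpolation conditions
relating `A`, `A'` and the limiting argument-derivative `Im(w'''(t₀)/(3 w''(t₀)))` hold. -/
theorem deformation_jacobian_nonvanishing
    (a b : ℕ) (ha : 0 < a) (hab : a < b)
    (w A : ℝ → ℂ)
    (hw_an : ∀ t : ℝ, AnalyticAt ℝ w t) (hA_an : ∀ t : ℝ, AnalyticAt ℝ A t)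
    (hw_per : ∀ t : ℝ, w (t + 2 * Real.pi) = w t)
    (hA_per : ∀ t : ℝ, A (t + 2 * Real.pi) = A t)
    (hw0 : w ≠ 0)
    (horder : ∀ t₀ : ℝ, w t₀ = 0 → deriv w t₀ = 0 ∧ iteratedDeriv 2 w t₀ ≠ 0)
    (harg : ∀ t : ℝ, w t ≠ 0 →
      (w t).re * (deriv w t).im - (w t).im * (deriv w t).re ≠ 0)
    (hzero : ∀ t₀ : ℝ, w t₀ = 0 →
      (iteratedDeriv 3 w t₀ / (3 * iteratedDeriv 2 w t₀)).im ≠ 0 ∧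
      (A t₀ * (starRingEnd ℂ) (iteratedDeriv 2 w t₀)).im = 0 ∧
      A t₀ * (starRingEnd ℂ) (iteratedDeriv 2 w t₀) ≠ 0 ∧
      ((starRingEnd ℂ) (A t₀) * deriv A t₀).re = 0 ∧
      (deriv A t₀ / A t₀).im - (iteratedDeriv 3 w t₀ / (3 * iteratedDeriv 2 w t₀)).im
        = (((a : ℝ) + (b : ℝ)) / (2 * (b : ℝ) - (a : ℝ))) *
            (iteratedDeriv 3 w t₀ / (3 * iteratedDeriv 2 w t₀)).im) :
    ∃ r₀ > (0 : ℝ), ∀ r : ℝ, 0 < r → r < r₀ → ∀ t : ℝ,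
      ((a : ℂ) * (r : ℂ) ^ (a - 1) * w t + (b : ℂ) * (r : ℂ) ^ (b - 1) * A t).re *
          ((r : ℂ) ^ a * deriv w t + (r : ℂ) ^ b * deriv A t).im -
        ((a : ℂ) * (r : ℂ) ^ (a - 1) * w t + (b : ℂ) * (r : ℂ) ^ (b - 1) * A t).im *
          ((r : ℂ) ^ a * deriv w t + (r : ℂ) ^ b * deriv A t).re ≠ 0 :=
  deformation_jacobian_nonvanishing_general a b ha hab w A hw_an hA_an hw_per hA_per horder harg
    hzero
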